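/- arXiv:1903.04886 — 3 statements merged into one kernel-verified Lean document; each statement's English description precedes it below -/
import Mathlib

section
/- Let Ω be a set, f : Ω → ℝ, and v : Ω → ℝ with v(x) ≥ 0 for all x ∈ Ω; let Ω_F = {x ∈ Ω : v(x) = 0} and Ω* = {x ∈ Ω_F : f(x) ≤ f(y) for all y ∈ Ω_F}. Let P ⊆ Ω be a finite population with Ω* ∩ P ≠ ∅, and let x*_P be any element of P ∩ Ω_F satisfying f(x*_P) ≤ f(y) for all y ∈ P ∩ Ω_F (such an element exists since Ω* ∩ P ⊆ P ∩ Ω_F and P is finite). For any weights w₁ > 0 and w₂ > 0, define e(x) = w₁·|f(x) − f(x*_P)| + w₂·v(x). Then {x ∈ P : e(x) ≤ e(y) for all y ∈ P} = Ω* ∩ P; that is, e is an equivalent objective function on P. -/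
/-- Theorem 2: the function `e x = w₁·|f x − f x*_P| + w₂·v x`, where `x*_P` is
a best feasible individual of a finite population `P` intersecting the optimal
set `Ω*`, is an equivalent objective function on `P`: its minimisers over `P`
are exactly `Ω* ∩ P`. -/
theorem stmt_4 {Ω : Type*} (f v : Ω → ℝ) (hv : ∀ x, 0 ≤ v x)
    (ΩF Ωstar : Set Ω)
    (hΩF : ΩF = {x | v x = 0})
    (hΩstar : Ωstar = {x ∈ ΩF | ∀ y ∈ ΩF, f x ≤ f y})
    (P : Set Ω) (hPfin : P.Finite)
    (hne : (Ωstar ∩ P).Nonempty)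
    (xstar : Ω) (hx1 : xstar ∈ P ∩ ΩF)
    (hx2 : ∀ y ∈ P ∩ ΩF, f xstar ≤ f y)
    (w₁ w₂ : ℝ) (hw₁ : 0 < w₁) (hw₂ : 0 < w₂)
    (e : Ω → ℝ) (he : ∀ x, e x = w₁ * |f x - f xstar| + w₂ * v x) :
    {x ∈ P | ∀ y ∈ P, e x ≤ e y} = Ωstar ∩ P := by
  obtain ⟨z, hzstar, hzP⟩ := hne
  rw [hΩstar] at hzstar
  obtain ⟨hzF, hzmin⟩ := hzstar
  have hxF : v xstar = 0 := by
    have := hx1.2; rw [hΩF] at this; exact this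
  have hzv : v z = 0 := by rw [hΩF] at hzF; exact hzF
  -- f z = f xstar
  have hfz : f z = f xstar := by
    have h1 : f z ≤ f xstar := hzmin xstar hx1.2
    have h2 : f xstar ≤ f z := hx2 z ⟨hzP, hzF⟩
    linarith
  have hez : e z = 0 := by
    rw [he, hfz, sub_self, abs_zero, hzv]; ring
  have henn : ∀ x, 0 ≤ e x := by
    intro x; rw [he]
    have := abs_nonneg (f x - f xstar)
    have := hv x
    nlinarith
  ext x
  simp only [Set.mem_setOf_eq, Set.mem_inter_iff]
  constructor
  · rintro ⟨hxP, hmin⟩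
    have hx0 : e x = 0 := le_antisymm (hez ▸ hmin z hzP) (henn x)
    rw [he] at hx0
    have ha : |f x - f xstar| = 0 ∧ v x = 0 := by
      constructor <;> nlinarith [abs_nonneg (f x - f xstar), hv x,
        mul_nonneg hw₁.le (abs_nonneg (f x - f xstar)), mul_nonneg hw₂.le (hv x)]
    have hfx : f x = f xstar := by
      have := abs_eq_zero.mp ha.1; linarith
    refine ⟨?_, hxP⟩
    rw [hΩstar]
    refine ⟨by rw [hΩF]; exact ha.2, fun y hy => ?_⟩
    calc f x = f z := by rw [hfx, hfz]
    _ ≤ f y := hzmin y hy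
  · rintro ⟨hxstar, hxP⟩
    rw [hΩstar] at hxstar
    obtain ⟨hxF, hxmin⟩ := hxstar
    have hxv : v x = 0 := by rw [hΩF] at hxF; exact hxF
    have hfx : f x = f xstar := le_antisymm (hxmin xstar hx1.2) (hx2 x ⟨hxP, hxF⟩)
    have hex : e x = 0 := by rw [he, hfx, sub_self, abs_zero, hxv]; ring
    exact ⟨hxP, fun y _ => hex ▸ henn y⟩
end

section
/- Let Ω be a set, f : Ω → ℝ, and v : Ω → ℝ with v(x) ≥ 0 for all x ∈ Ω; let Ω_F = {x ∈ Ω : v(x) = 0} and Ω* = {x ∈ Ω_F : f(x) ≤ f(y) for all y ∈ Ω_F}. Let P ⊆ Ω be a finite population with Ω* ∩ P ≠ ∅, and set f_F(P) = max{f(y) : y ∈ P ∩ Ω_F} (the maximum exists since Ω* ∩ P ⊆ P ∩ Ω_F and P is finite). Define e on P by e(x) = f(x) if x ∈ Ω_F and e(x) = v(x) + f_F(P) if x ∉ Ω_F. Then {x ∈ P : e(x) ≤ e(y) for all y ∈ P} = Ω* ∩ P; that is, e is an equivalent objective function on P. -/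
/-- The superiority-of-feasibility rule yields an equivalent objective function
on any finite population `P` intersecting `Ω*`: with `f_F(P)` the maximum of
`f` over the feasible points of `P`, the function `e` equal to `f` on feasible
points and to `v + f_F(P)` on infeasible ones has `Ω* ∩ P` as its set of
minimisers over `P`. -/
theorem stmt_8 {Ω : Type*} (f v : Ω → ℝ) (hv : ∀ x, 0 ≤ v x)
    (ΩF Ωstar : Set Ω)
    (hΩF : ΩF = {x | v x = 0})
    (hΩstar : Ωstar = {x ∈ ΩF | ∀ y ∈ ΩF, f x ≤ f y})
    (P : Set Ω) (hPfin : P.Finite)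
    (hne : (Ωstar ∩ P).Nonempty)
    (fF : ℝ) (hfF1 : ∃ y ∈ P ∩ ΩF, f y = fF)
    (hfF2 : ∀ y ∈ P ∩ ΩF, f y ≤ fF)
    (e : Ω → ℝ)
    (he : ∀ x ∈ P, (x ∈ ΩF → e x = f x) ∧ (x ∉ ΩF → e x = v x + fF)) :
    {x ∈ P | ∀ y ∈ P, e x ≤ e y} = Ωstar ∩ P := by
  obtain ⟨xs, hxsS, hxsP⟩ := hne
  rw [hΩstar] at hxsS
  obtain ⟨hxsF, hxsMin⟩ := hxsS
  have hxsfF : f xs ≤ fF := hfF2 xs ⟨hxsP, hxsF⟩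
  ext x
  constructor
  · rintro ⟨hxP, hmin⟩
    have hxF : x ∈ ΩF := by
      by_contra hxNF
      have hex : e x = v x + fF := (he x hxP).2 hxNF
      have hexs : e xs = f xs := (he xs hxsP).1 hxsF
      have hvpos : 0 < v x := by
        rcases lt_or_eq_of_le (hv x) with h | h
        · exact h
        · exact absurd (hΩF ▸ (Set.mem_setOf_eq ▸ h.symm) : x ∈ ΩF) hxNF
      have := hmin xs hxsP
      rw [hex, hexs] at this
      linarith
    have hexf : e x = f x := (he x hxP).1 hxF
    have hfxs : f x ≤ f xs := by
      have := hmin xs hxsP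
      rw [hexf, (he xs hxsP).1 hxsF] at this
      exact this
    refine ⟨hΩstar ▸ ⟨hxF, fun y hy => le_trans hfxs (hxsMin y hy)⟩, hxP⟩
  · rintro ⟨hxS, hxP⟩
    rw [hΩstar] at hxS
    obtain ⟨hxF, hxMin⟩ := hxS
    refine ⟨hxP, fun y hyP => ?_⟩
    rw [(he x hxP).1 hxF]
    by_cases hyF : y ∈ ΩF
    · rw [(he y hyP).1 hyF]; exact hxMin y hyF
    · rw [(he y hyP).2 hyF]
      have := hfF2 x ⟨hxP, hxF⟩
      have := hv y
      linarith
end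

section
/- Let Ω = [−1000, 1000] ⊆ ℝ, f(x) = x, and v(x) = max(0, −sin(πx/1200)). Call a point x ∈ Ω Pareto optimal for (f, v) if there is no y ∈ Ω with f(y) ≤ f(x) and v(y) ≤ v(x) such that f(y) < f(x) or v(y) < v(x). Then the set of Pareto optimal points of (f, v) on Ω equals {−1000} ∪ (−200, 0]. -/
open Real Set

private lemma mem_sin_dom {t : ℝ} (h1 : -(π/2) ≤ t) (h2 : t ≤ π/2) :
    t ∈ Icc (-(π/2)) (π/2) := ⟨h1, h2⟩

private lemma sin_nonneg_of_mem {x : ℝ} (h1 : 0 ≤ x) (h2 : x ≤ 1000) :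
    0 ≤ Real.sin (x * π / 1200) := by
  have hπ := Real.pi_pos
  apply Real.sin_nonneg_of_nonneg_of_le_pi
  · nlinarith
  · nlinarith

private lemma sin_le_neg_half {x : ℝ} (h1 : -1000 ≤ x) (h2 : x ≤ -200) :
    Real.sin (x * π / 1200) ≤ -(1/2) := by
  have hπ := Real.pi_pos
  have hmono := Real.strictMonoOn_sin.monotoneOn
  rcases le_or_gt x (-600) with h | h
  · -- sin θ = -sin(θ+π), θ+π ∈ [π/6, π/2]
    have key : Real.sin (x * π / 1200 + π) ≥ Real.sin (π/6) := by
      apply hmono (mem_sin_dom (by nlinarith) (by nlinarith))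
        (mem_sin_dom (by nlinarith) (by nlinarith))
      nlinarith
    rw [Real.sin_pi_div_six] at key
    have := Real.sin_add_pi (x * π / 1200)
    linarith
  · have key : Real.sin (x * π / 1200) ≤ Real.sin (-(π/6)) := by
      apply hmono (mem_sin_dom (by nlinarith) (by nlinarith))
        (mem_sin_dom (by nlinarith) (by nlinarith))
      nlinarith
    rw [Real.sin_neg, Real.sin_pi_div_six] at key
    linarith

private lemma sin_neg1000 : Real.sin ((-1000 : ℝ) * π / 1200) = -(1/2) := by
  have : (-1000 : ℝ) * π / 1200 = -(π - π/6) := by ring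
  rw [this, Real.sin_neg, Real.sin_pi_sub, Real.sin_pi_div_six]

private lemma neg_half_lt_sin {x : ℝ} (h1 : -200 < x) (h2 : x ≤ 0) :
    -(1/2) < Real.sin (x * π / 1200) := by
  have hπ := Real.pi_pos
  have key : Real.sin (-(π/6)) < Real.sin (x * π / 1200) := by
    apply Real.strictMonoOn_sin (mem_sin_dom (by nlinarith) (by nlinarith))
      (mem_sin_dom (by nlinarith) (by nlinarith))
    nlinarith
  rw [Real.sin_neg, Real.sin_pi_div_six] at key
  linarith

private lemma sin_strict {y x : ℝ} (hy : -600 ≤ y) (hx : x ≤ 0) (hyx : y < x) :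
    Real.sin (y * π / 1200) < Real.sin (x * π / 1200) := by
  have hπ := Real.pi_pos
  apply Real.strictMonoOn_sin (mem_sin_dom (by nlinarith) (by nlinarith))
    (mem_sin_dom (by nlinarith) (by nlinarith))
  nlinarith

/-- Example 1: the Pareto optimal set of the bi-objective problem
`min (f, v)` on `Ω = [-1000, 1000]`, with `f(x) = x` and
`v(x) = max(0, -sin(πx/1200))`, equals `{-1000} ∪ (-200, 0]`. -/
theorem stmt_12 :
    {x : ℝ | x ∈ Set.Icc (-1000 : ℝ) 1000 ∧
        ¬ ∃ y ∈ Set.Icc (-1000 : ℝ) 1000,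
          y ≤ x ∧
          max 0 (-Real.sin (y * Real.pi / 1200)) ≤ max 0 (-Real.sin (x * Real.pi / 1200)) ∧
          (y < x ∨
            max 0 (-Real.sin (y * Real.pi / 1200)) < max 0 (-Real.sin (x * Real.pi / 1200)))}
      = {(-1000 : ℝ)} ∪ Set.Ioc (-200 : ℝ) 0 := by
  ext x
  simp only [Set.mem_setOf_eq, Set.mem_Icc, Set.mem_union, Set.mem_singleton_iff,
    Set.mem_Ioc]
  constructor
  · rintro ⟨⟨hx1, hx2⟩, hnd⟩
    by_contra hne
    push_neg at hne
    obtain ⟨hne1, hne2⟩ := hne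
    rcases lt_or_ge (0 : ℝ) x with hpos | hle0
    · -- x ∈ (0,1000]: dominated by 0
      exact hnd ⟨0, ⟨by norm_num, by norm_num⟩, le_of_lt hpos, by
        rw [max_le_iff]
        constructor
        · exact le_max_left _ _
        · rw [zero_mul, zero_div, Real.sin_zero, neg_zero]
          exact le_max_left _ _, Or.inl hpos⟩
    · -- x ≤ 0, x ≠ -1000, not in (-200,0] ⇒ x ∈ (-1000,-200]: dominated by -1000
      have hx200 : x ≤ -200 := by
        rcases le_or_gt x (-200) with h | h
        · exact h
        · exact absurd (hne2 h) (by linarith)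
      have hxgt : -1000 < x := lt_of_le_of_ne hx1 (Ne.symm hne1)
      have hvx : (1:ℝ)/2 ≤ max 0 (-Real.sin (x * π / 1200)) := by
        have := sin_le_neg_half hx1 hx200
        have : (1:ℝ)/2 ≤ -Real.sin (x * π / 1200) := by linarith
        exact le_trans this (le_max_right _ _)
      exact hnd ⟨-1000, ⟨le_refl _, by norm_num⟩, le_of_lt hxgt, by
        rw [sin_neg1000]
        have : max (0:ℝ) (-(-(1/2))) = 1/2 := by norm_num
        rw [this]; exact hvx, Or.inl hxgt⟩
  · rintro (rfl | ⟨hx1, hx2⟩)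
    · -- x = -1000 is Pareto
      refine ⟨⟨le_refl _, by norm_num⟩, ?_⟩
      rintro ⟨y, ⟨hy1, hy2⟩, hyx, hv, hs⟩
      have : y = -1000 := le_antisymm hyx hy1
      subst this
      rcases hs with h | h
      · exact lt_irrefl _ h
      · exact lt_irrefl _ h
    · -- x ∈ (-200, 0] is Pareto
      refine ⟨⟨by linarith, by linarith⟩, ?_⟩
      rintro ⟨y, ⟨hy1, hy2⟩, hyx, hv, hs⟩
      have hylt : y < x := by
        rcases hs with h | h
        · exact h
        · rcases lt_or_eq_of_le hyx with h' | h'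
          · exact h'
          · subst h'; exact absurd h (lt_irrefl _)
      -- v(x) < 1/2
      have hsx := neg_half_lt_sin hx1 hx2
      have hsx0 : Real.sin (x * π / 1200) ≤ 0 := by
        have hπ := Real.pi_pos
        rcases eq_or_lt_of_le hx2 with rfl | h
        · rw [zero_mul, zero_div, Real.sin_zero]
        · apply le_of_lt
          apply Real.sin_neg_of_neg_of_neg_pi_lt
          · nlinarith
          · nlinarith
      have hvx_eq : max 0 (-Real.sin (x * π / 1200)) = -Real.sin (x * π / 1200) :=
        max_eq_right (by linarith)
      have hvx_lt : max 0 (-Real.sin (x * π / 1200)) < 1/2 := by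
        rw [hvx_eq]; linarith
      rcases le_or_gt y (-200) with hy200 | hy200
      · -- v(y) ≥ 1/2
        have := sin_le_neg_half hy1 hy200
        have hvy : (1:ℝ)/2 ≤ max 0 (-Real.sin (y * π / 1200)) :=
          le_trans (by linarith) (le_max_right _ _)
        linarith
      · -- y ∈ (-200, x): v(y) > v(x)
        have hstrict := sin_strict (by linarith : -600 ≤ y) hx2 hylt
        have hvy_eq : max 0 (-Real.sin (y * π / 1200)) = -Real.sin (y * π / 1200) :=
          max_eq_right (by linarith)
        rw [hvy_eq, hvx_eq] at hv
        linarith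
end
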